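/- Let N = U + W mod Q where U and W are independent A-valued random variables (A = Z/QZ) with W full-support. Let X be independent of (U, W), X̃ = X + U, and Z = X̃ + W = X + N. Then for any X̂ jointly distributed with Z satisfying E[ρ_W(Z − X̂)] ≤ H(W), I(Z; X̂) ≥ H(Z) − H(W), with equality achieved by X̂ = X̃; i.e., the rate-distortion function of Z under ρ_W at level H(W) equals H(Z) − H(W) and is achieved by the partially noisy source X̃. -/

import Mathlib

open Finset Real MeasureTheory ProbabilityTheory

def IsPMF {A : Type*} [Fintype A] (p : A → ℝ) : Prop :=
  (∀ a, 0 ≤ p a) ∧ ∑ a, p a = 1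

noncomputable def entH {A : Type*} [Fintype A] (p : A → ℝ) : ℝ :=
  ∑ a, Real.negMulLog (p a)

noncomputable def rho {A : Type*} [Fintype A] (ν : A → ℝ) (a : A) : ℝ :=
  - Real.log (ν a)

/-- The PMF of a finite-alphabet random variable `V` on `(Ω, μ)`. -/
noncomputable def pmfOf {Ω A : Type*} [Fintype A] [MeasurableSpace Ω]
    (μ : Measure Ω) (V : Ω → A) : A → ℝ :=
  fun a => (μ (V ⁻¹' {a})).toReal

/-- Shannon entropy of a finite-alphabet random variable. -/
noncomputable def Hm {Ω A : Type*} [Fintype A] [MeasurableSpace Ω]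
    (μ : Measure Ω) (V : Ω → A) : ℝ :=
  entH (pmfOf μ V)

/-- Mutual information I(V;W) = H(V) + H(W) - H(V,W). -/
noncomputable def MI {Ω A B : Type*} [Fintype A] [Fintype B] [MeasurableSpace Ω]
    (μ : Measure Ω) (V : Ω → A) (W : Ω → B) : ℝ :=
  Hm μ V + Hm μ W - Hm μ (fun ω => (V ω, W ω))

section AuxPMF

variable {A B : Type*} [Fintype A] [Fintype B]

lemma entH_eq_sum_rho (p : A → ℝ) : entH p = ∑ a, p a * rho p a := by
  unfold entH rho Real.negMulLog
  exact Finset.sum_congr rfl fun a _ => by ring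

/-- Gibbs' inequality (cross entropy dominates entropy). -/
lemma gibbs (p q : A → ℝ) (hp : IsPMF p) (hqnn : ∀ a, 0 ≤ q a)
    (hq0 : ∀ a, p a ≠ 0 → 0 < q a) (hq1 : ∑ a, q a ≤ 1) :
    entH p ≤ ∑ a, p a * rho q a := by
  have key : ∀ a, Real.negMulLog (p a) - p a * rho q a ≤ q a - p a := by
    intro a
    rcases eq_or_ne (p a) 0 with h | h
    · simp [h, hqnn a]
    · have hpa : 0 < p a := lt_of_le_of_ne (hp.1 a) (Ne.symm h)
      have hqa : 0 < q a := hq0 a h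
      have hlog : Real.log (q a / p a) ≤ q a / p a - 1 :=
        Real.log_le_sub_one_of_pos (div_pos hqa hpa)
      have hld : Real.log (q a / p a) = Real.log (q a) - Real.log (p a) :=
        Real.log_div hqa.ne' hpa.ne'
      have h1 := mul_le_mul_of_nonneg_left hlog hpa.le
      rw [hld] at h1
      have h2 : p a * (q a / p a - 1) = q a - p a := by field_simp
      rw [h2] at h1
      unfold Real.negMulLog rho
      nlinarith [h1]
  calc entH p = ∑ a, p a * rho q a + ∑ a, (Real.negMulLog (p a) - p a * rho q a) := by
        unfold entH; rw [← Finset.sum_add_distrib]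
        exact Finset.sum_congr rfl fun a _ => by ring
    _ ≤ ∑ a, p a * rho q a + ∑ a, (q a - p a) :=
        add_le_add_right (Finset.sum_le_sum fun a _ => key a) _
    _ ≤ ∑ a, p a * rho q a + 0 :=
        by linarith [show ∑ a, (q a - p a) ≤ 0 by rw [Finset.sum_sub_distrib, hp.2]; linarith]
    _ = ∑ a, p a * rho q a := by ring

lemma entH_prod (p : A → ℝ) (r : B → ℝ) (hp : ∑ a, p a = 1) (hr : ∑ b, r b = 1) :
    entH (fun ab : A × B => p ab.1 * r ab.2) = entH p + entH r := by
  unfold entH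
  rw [Fintype.sum_prod_type]
  calc ∑ a, ∑ b, Real.negMulLog (p a * r b)
      = ∑ a, ∑ b, (r b * Real.negMulLog (p a) + p a * Real.negMulLog (r b)) :=
        Finset.sum_congr rfl fun a _ => Finset.sum_congr rfl fun b _ =>
          Real.negMulLog_mul _ _
    _ = ∑ a, ((∑ b, r b) * Real.negMulLog (p a) + p a * ∑ b, Real.negMulLog (r b)) := by
        refine Finset.sum_congr rfl fun a _ => ?_
        rw [Finset.sum_add_distrib, ← Finset.sum_mul, ← Finset.mul_sum]
    _ = ∑ a, (Real.negMulLog (p a) + p a * ∑ b, Real.negMulLog (r b)) := by rw [hr]; simp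
    _ = (∑ a, Real.negMulLog (p a)) + (∑ a, p a) * ∑ b, Real.negMulLog (r b) := by
        rw [Finset.sum_add_distrib, ← Finset.sum_mul]
    _ = (∑ a, Real.negMulLog (p a)) + ∑ b, Real.negMulLog (r b) := by rw [hp, one_mul]

/-- Subadditivity of entropy for a joint pmf. -/
lemma entH_subadd (pj : A × B → ℝ) (hπ : IsPMF pj) :
    entH pj ≤ entH (fun a => ∑ b, pj (a, b)) + entH (fun b => ∑ a, pj (a, b)) := by
  set pA : A → ℝ := fun a => ∑ b, pj (a, b) with hpA
  set pB : B → ℝ := fun b => ∑ a, pj (a, b) with hpB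
  have hπnn := hπ.1
  have hpAnn : ∀ a, 0 ≤ pA a := fun a => Finset.sum_nonneg fun b _ => hπnn _
  have hpBnn : ∀ b, 0 ≤ pB b := fun b => Finset.sum_nonneg fun a _ => hπnn _
  have hpAsum : ∑ a, pA a = 1 := by
    rw [hpA]; rw [← hπ.2, Fintype.sum_prod_type]
  have hpBsum : ∑ b, pB b = 1 := by
    rw [hpB]; rw [← hπ.2, Fintype.sum_prod_type_right]
  have hπleA : ∀ ab : A × B, pj ab ≤ pA ab.1 := fun ab =>
    Finset.single_le_sum (fun b _ => hπnn (ab.1, b)) (Finset.mem_univ ab.2)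
  have hπleB : ∀ ab : A × B, pj ab ≤ pB ab.2 := fun ab =>
    Finset.single_le_sum (fun a _ => hπnn (a, ab.2)) (Finset.mem_univ ab.1)
  have h1 : entH pj ≤ ∑ ab : A × B, pj ab * rho (fun ab : A × B => pA ab.1 * pB ab.2) ab := by
    refine gibbs _ _ hπ ?_ ?_ ?_
    · exact fun ab => mul_nonneg (hpAnn _) (hpBnn _)
    · intro ab hab
      have : 0 < pj ab := lt_of_le_of_ne (hπnn ab) (Ne.symm hab)
      exact mul_pos (lt_of_lt_of_le this (hπleA ab)) (lt_of_lt_of_le this (hπleB ab))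
    · refine le_of_eq ?_
      rw [Fintype.sum_prod_type]
      calc ∑ a, ∑ b, pA a * pB b = ∑ a, pA a * ∑ b, pB b := by
            exact Finset.sum_congr rfl fun a _ => (Finset.mul_sum _ _ _).symm
        _ = 1 := by rw [hpBsum]; simpa using hpAsum
  have h2 : ∑ ab : A × B, pj ab * rho (fun ab : A × B => pA ab.1 * pB ab.2) ab
      = ∑ ab : A × B, (pj ab * rho pA ab.1 + pj ab * rho pB ab.2) := by
    refine Finset.sum_congr rfl fun ab _ => ?_
    rcases eq_or_ne (pj ab) 0 with h | h
    · simp [h]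
    · have hπpos : 0 < pj ab := lt_of_le_of_ne (hπnn ab) (Ne.symm h)
      have hA : 0 < pA ab.1 := lt_of_lt_of_le hπpos (hπleA ab)
      have hB : 0 < pB ab.2 := lt_of_lt_of_le hπpos (hπleB ab)
      unfold rho
      rw [Real.log_mul hA.ne' hB.ne']
      ring
  have h3 : ∑ ab : A × B, (pj ab * rho pA ab.1 + pj ab * rho pB ab.2)
      = entH pA + entH pB := by
    rw [Finset.sum_add_distrib]
    congr 1
    · rw [entH_eq_sum_rho, Fintype.sum_prod_type]
      refine Finset.sum_congr rfl fun a _ => ?_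
      have hstep : ∑ y : B, pj (a, y) * rho pA (a, y).1 = ∑ y : B, pj (a, y) * rho pA a :=
        Finset.sum_congr rfl fun y _ => rfl
      rw [hstep, ← Finset.sum_mul]
    · rw [entH_eq_sum_rho, Fintype.sum_prod_type_right]
      refine Finset.sum_congr rfl fun b _ => ?_
      have hstep : ∑ x : A, pj (x, b) * rho pB (x, b).2 = ∑ x : A, pj (x, b) * rho pB b :=
        Finset.sum_congr rfl fun x _ => rfl
      rw [hstep, ← Finset.sum_mul]
  calc entH pj ≤ _ := h1
    _ = _ := h2
    _ = entH pA + entH pB := h3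

end AuxPMF

section AuxMeasure

variable {Ω A B : Type*} [MeasurableSpace Ω] [Fintype A] [Fintype B]
  [MeasurableSpace A] [MeasurableSingletonClass A]
  [MeasurableSpace B] [MeasurableSingletonClass B]
  (μ : Measure Ω) [IsProbabilityMeasure μ]

lemma isPMF_pmfOf (V : Ω → A) (hV : Measurable V) : IsPMF (pmfOf μ V) := by
  refine ⟨fun a => ENNReal.toReal_nonneg, ?_⟩
  have h := sum_measure_preimage_singleton (μ := μ) (Finset.univ : Finset A)
    (fun y _ => hV (measurableSet_singleton y))
  have h2 : ∑ a, pmfOf μ V a = (∑ a, μ (V ⁻¹' {a})).toReal :=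
    (ENNReal.toReal_sum (fun a _ => measure_ne_top μ _)).symm
  rw [h2, h]
  simp [measure_univ]

lemma pmfOf_marg_fst (V : Ω → A) (W : Ω → B) (hV : Measurable V) (hW : Measurable W)
    (a : A) : pmfOf μ V a = ∑ b, pmfOf μ (fun ω => (V ω, W ω)) (a, b) := by
  have hP : Measurable (fun ω => (V ω, W ω)) := hV.prodMk hW
  have hset : V ⁻¹' {a} = (fun ω => (V ω, W ω)) ⁻¹' ↑(({a} : Finset A) ×ˢ (Finset.univ : Finset B)) := by
    ext ω; simp [eq_comm]
  have hsum := sum_measure_preimage_singleton (μ := μ)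
    (({a} : Finset A) ×ˢ (Finset.univ : Finset B))
    (fun y _ => hP (measurableSet_singleton y))
  unfold pmfOf
  rw [hset, ← hsum, Finset.sum_product, Finset.sum_singleton,
    ENNReal.toReal_sum (fun b _ => measure_ne_top μ _)]

lemma pmfOf_marg_snd (V : Ω → A) (W : Ω → B) (hV : Measurable V) (hW : Measurable W)
    (b : B) : pmfOf μ W b = ∑ a, pmfOf μ (fun ω => (V ω, W ω)) (a, b) := by
  have hP : Measurable (fun ω => (V ω, W ω)) := hV.prodMk hW
  have hset : W ⁻¹' {b} = (fun ω => (V ω, W ω)) ⁻¹' ↑((Finset.univ : Finset A) ×ˢ ({b} : Finset B)) := by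
    ext ω; simp [eq_comm]
  have hsum := sum_measure_preimage_singleton (μ := μ)
    ((Finset.univ : Finset A) ×ˢ ({b} : Finset B))
    (fun y _ => hP (measurableSet_singleton y))
  unfold pmfOf
  rw [hset, ← hsum, Finset.sum_product_right, Finset.sum_singleton,
    ENNReal.toReal_sum (fun a _ => measure_ne_top μ _)]

lemma Hm_equiv (e : A ≃ B) (V : Ω → A) : Hm μ (fun ω => e (V ω)) = Hm μ V := by
  unfold Hm entH pmfOf
  rw [← Equiv.sum_comp e (fun b => Real.negMulLog ((μ ((fun ω => e (V ω)) ⁻¹' {b})).toReal))]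
  refine Finset.sum_congr rfl fun a _ => ?_
  have hset : (fun ω => e (V ω)) ⁻¹' {e a} = V ⁻¹' {a} := by
    ext ω; simp [e.injective.eq_iff]
  rw [hset]

lemma pmfOf_pair_indep (V : Ω → A) (W : Ω → B) (hind : IndepFun V W μ)
    (a : A) (b : B) :
    pmfOf μ (fun ω => (V ω, W ω)) (a, b) = pmfOf μ V a * pmfOf μ W b := by
  unfold pmfOf
  have hset : (fun ω => (V ω, W ω)) ⁻¹' {(a, b)} = V ⁻¹' {a} ∩ W ⁻¹' {b} := by
    ext ω; simp [Prod.ext_iff]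
  rw [hset, hind.measure_inter_preimage_eq_mul _ _ (measurableSet_singleton a)
    (measurableSet_singleton b), ENNReal.toReal_mul]

end AuxMeasure

/-- The subtraction equiv on pairs. -/
def subEquiv (G : Type*) [AddGroup G] : (G × G) ≃ (G × G) where
  toFun p := (p.1 - p.2, p.2)
  invFun p := (p.1 + p.2, p.2)
  left_inv p := by simp
  right_inv p := by simp

/-- Mismatched compression (single-letter): with N = U + W, X̃ = X + U, Z = X̃ + W,
any X̂ with E[ρ_W(Z - X̂)] ≤ H(W) satisfies I(Z;X̂) ≥ H(Z) - H(W); the bound is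
achieved by the partially noisy source X̂ = X̃ (at distortion exactly H(W)). -/
theorem partial_denoising
    {Ω : Type*} [MeasurableSpace Ω] (μ : Measure Ω) [IsProbabilityMeasure μ]
    (Q : ℕ) [NeZero Q]
    (νW : ZMod Q → ℝ) (hνW : IsPMF νW) (hposW : ∀ a, 0 < νW a)
    (X U W : Ω → ZMod Q)
    (hXmeas : Measurable X) (hUmeas : Measurable U) (hWmeas : Measurable W)
    (hWpmf : pmfOf μ W = νW)
    -- X, U, W mutually independent:
    (hUW : IndepFun U W μ)
    (hXUW : IndepFun X (fun ω => (U ω, W ω)) μ)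
    (Xt : Ω → ZMod Q) (hXt : Xt = fun ω => X ω + U ω)
    (Z : Ω → ZMod Q) (hZ : Z = fun ω => Xt ω + W ω) :
    (∀ Xh : Ω → ZMod Q, Measurable Xh →
        ∑ a : ZMod Q, pmfOf μ (fun ω => Z ω - Xh ω) a * rho νW a ≤ entH νW →
        MI μ Z Xh ≥ Hm μ Z - entH νW) ∧
    (∑ a : ZMod Q, pmfOf μ (fun ω => Z ω - Xt ω) a * rho νW a = entH νW) ∧
    MI μ Z Xt = Hm μ Z - entH νW := by
  have hXtmeas : Measurable Xt := by rw [hXt]; exact hXmeas.add hUmeas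
  have hZmeas : Measurable Z := by rw [hZ]; exact hXtmeas.add hWmeas
  have hZmXt : (fun ω => Z ω - Xt ω) = W := by
    funext ω; rw [hZ]; exact add_sub_cancel_left _ _
  -- Part 2: distortion of Xt equals H(W)
  have part2 : ∑ a : ZMod Q, pmfOf μ (fun ω => Z ω - Xt ω) a * rho νW a = entH νW := by
    rw [hZmXt, hWpmf, ← entH_eq_sum_rho]
  -- Independence of Xt and W at the pmf level
  have hkey : ∀ a b : ZMod Q, μ (W ⁻¹' {a} ∩ Xt ⁻¹' {b})
      = μ (W ⁻¹' {a}) * μ (Xt ⁻¹' {b}) := by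
    intro a b
    have hT : Measurable (fun ω => (X ω, U ω, W ω)) :=
      hXmeas.prodMk (hUmeas.prodMk hWmeas)
    have hXU : Measurable (fun ω => (X ω, U ω)) := hXmeas.prodMk hUmeas
    -- singleton measure of the triple
    have htriple : ∀ x u w : ZMod Q, μ ((fun ω => (X ω, U ω, W ω)) ⁻¹' {(x, u, w)})
        = μ (X ⁻¹' {x}) * (μ (U ⁻¹' {u}) * μ (W ⁻¹' {w})) := by
      intro x u w
      have hset : (fun ω => (X ω, U ω, W ω)) ⁻¹' {(x, u, w)}
          = X ⁻¹' {x} ∩ (fun ω => (U ω, W ω)) ⁻¹' {(u, w)} := by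
        ext ω; simp [Prod.ext_iff, and_assoc]
      have hset2 : (fun ω => (U ω, W ω)) ⁻¹' {(u, w)} = U ⁻¹' {u} ∩ W ⁻¹' {w} := by
        ext ω; simp [Prod.ext_iff]
      rw [hset, hXUW.measure_inter_preimage_eq_mul _ _ (measurableSet_singleton x)
        (measurableSet_singleton (u, w)), hset2,
        hUW.measure_inter_preimage_eq_mul _ _ (measurableSet_singleton u)
        (measurableSet_singleton w)]
    have hpairXU : ∀ x u : ZMod Q, μ ((fun ω => (X ω, U ω)) ⁻¹' {(x, u)})
        = μ (X ⁻¹' {x}) * μ (U ⁻¹' {u}) := by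
      intro x u
      have hset : (fun ω => (X ω, U ω)) ⁻¹' {(x, u)} = X ⁻¹' {x} ∩ U ⁻¹' {u} := by
        ext ω; simp [Prod.ext_iff]
      have hXUind : IndepFun X U μ := by
        have := hXUW.comp measurable_id (measurable_fst : Measurable
          (Prod.fst : ZMod Q × ZMod Q → ZMod Q))
        exact this
      rw [hset, hXUind.measure_inter_preimage_eq_mul _ _ (measurableSet_singleton x)
        (measurableSet_singleton u)]
    -- decompose the event over the value of X
    have hinj3 : Function.Injective (fun x : ZMod Q => (x, b - x, a)) := by
      intro x y h; exact (Prod.ext_iff.mp h).1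
    have hinj2 : Function.Injective (fun x : ZMod Q => (x, b - x)) := by
      intro x y h; exact (Prod.ext_iff.mp h).1
    have hdec1 : W ⁻¹' {a} ∩ Xt ⁻¹' {b}
        = (fun ω => (X ω, U ω, W ω)) ⁻¹' ↑(Finset.univ.image (fun x : ZMod Q => (x, b - x, a))) := by
      ext ω
      simp only [Set.mem_inter_iff, Set.mem_preimage, Set.mem_singleton_iff,
        Finset.coe_image, Finset.coe_univ, Set.image_univ, Set.mem_range, Prod.ext_iff, hXt]
      constructor
      · rintro ⟨hw, hx⟩
        exact ⟨X ω, rfl, (eq_sub_of_add_eq' hx).symm, hw.symm⟩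
      · rintro ⟨x, hx, hu, hw⟩
        refine ⟨hw.symm, ?_⟩
        rw [← hx, ← hu]; ring
    have hdec2 : Xt ⁻¹' {b}
        = (fun ω => (X ω, U ω)) ⁻¹' ↑(Finset.univ.image (fun x : ZMod Q => (x, b - x))) := by
      ext ω
      simp only [Set.mem_preimage, Set.mem_singleton_iff, Finset.coe_image,
        Finset.coe_univ, Set.image_univ, Set.mem_range, Prod.ext_iff, hXt]
      constructor
      · intro hx
        exact ⟨X ω, rfl, (eq_sub_of_add_eq' hx).symm⟩
      · rintro ⟨x, hx, hu⟩
        rw [← hx, ← hu]; ring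
    rw [hdec1, hdec2,
      ← sum_measure_preimage_singleton _ (fun y _ => hT (measurableSet_singleton y)),
      ← sum_measure_preimage_singleton _ (fun y _ => hXU (measurableSet_singleton y)),
      Finset.sum_image (fun x _ y _ h => hinj3 h),
      Finset.sum_image (fun x _ y _ h => hinj2 h)]
    rw [Finset.mul_sum]
    refine Finset.sum_congr rfl fun x _ => ?_
    rw [htriple, hpairXU]
    ring
  have hpmfWXt : pmfOf μ (fun ω => (W ω, Xt ω)) =
      fun ab => pmfOf μ W ab.1 * pmfOf μ Xt ab.2 := by
    funext ab
    unfold pmfOf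
    have hset : (fun ω => (W ω, Xt ω)) ⁻¹' {ab} = W ⁻¹' {ab.1} ∩ Xt ⁻¹' {ab.2} := by
      ext ω; simp [Prod.ext_iff]
    rw [hset, hkey, ENNReal.toReal_mul]
  -- entropy of the joint (Z, V) equals entropy of (Z - V, V)
  have hHmEquiv : ∀ V : Ω → ZMod Q,
      Hm μ (fun ω => (Z ω, V ω)) = Hm μ (fun ω => (Z ω - V ω, V ω)) := by
    intro V
    have := Hm_equiv μ (subEquiv (ZMod Q)) (fun ω => (Z ω, V ω))
    exact this.symm
  -- Part 3: equality for Xt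
  have part3 : MI μ Z Xt = Hm μ Z - entH νW := by
    unfold MI
    rw [hHmEquiv Xt]
    have : (fun ω => (Z ω - Xt ω, Xt ω)) = fun ω => (W ω, Xt ω) := by
      funext ω
      rw [show Z ω - Xt ω = W ω from congrFun hZmXt ω]
    rw [this]
    have hprod : Hm μ (fun ω => (W ω, Xt ω)) = Hm μ W + Hm μ Xt := by
      unfold Hm
      rw [hpmfWXt]
      exact entH_prod _ _ ((isPMF_pmfOf μ W hWmeas).2) ((isPMF_pmfOf μ Xt hXtmeas).2)
    rw [hprod]
    have hHW : Hm μ W = entH νW := by unfold Hm; rw [hWpmf]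
    rw [hHW]
    ring
  refine ⟨?_, part2, part3⟩
  -- Part 1: converse bound
  intro Xh hXhmeas hdist
  set D : Ω → ZMod Q := fun ω => Z ω - Xh ω with hD
  have hDmeas : Measurable D := hZmeas.sub hXhmeas
  -- H(Z, Xh) = H(D, Xh) ≤ H(D) + H(Xh)
  have hjoint : Hm μ (fun ω => (Z ω, Xh ω)) ≤ Hm μ D + Hm μ Xh := by
    rw [hHmEquiv Xh]
    have hπ : IsPMF (pmfOf μ (fun ω => (D ω, Xh ω))) :=
      isPMF_pmfOf μ _ (hDmeas.prodMk hXhmeas)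
    have hsub := entH_subadd (pmfOf μ (fun ω => (D ω, Xh ω))) hπ
    have hmA : pmfOf μ D = fun a => ∑ b, pmfOf μ (fun ω => (D ω, Xh ω)) (a, b) := by
      funext a; exact pmfOf_marg_fst μ D Xh hDmeas hXhmeas a
    have hmB : pmfOf μ Xh = fun b => ∑ a, pmfOf μ (fun ω => (D ω, Xh ω)) (a, b) := by
      funext b; exact pmfOf_marg_snd μ D Xh hDmeas hXhmeas b
    unfold Hm
    rw [hmA, hmB]
    exact hsub
  -- H(D) ≤ cross entropy ≤ entH νW
  have hHD : Hm μ D ≤ entH νW := by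
    have hg : Hm μ D ≤ ∑ a, pmfOf μ D a * rho νW a := by
      unfold Hm
      refine gibbs _ _ (isPMF_pmfOf μ D hDmeas) (fun a => (hposW a).le)
        (fun a _ => hposW a) (le_of_eq hνW.2)
    exact hg.trans hdist
  unfold MI
  have := hjoint
  linarith
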